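/- Let π and π̂ be policies inducing state-occupancy measures d_π and d_π̂ in a finite-horizon MDP of horizon H, where d_π(s) = (1/H)·Σ_{t=1}^H P_π(s_t = s). Then ‖d_π − d_π̂‖₁ ≤ 2H · E_{s∼d_π}[ TV(π(·|s), π̂(·|s)) ]. -/

import Mathlib

open Finset

/-- State distribution at time `t` induced by policy `π` in an MDP with transition
kernel `P` and initial distribution `ρ`. -/
noncomputable def stateDist {S A : Type*} [Fintype S] [Fintype A]
    (P : S → A → S → ℝ) (ρ : S → ℝ) (π : S → A → ℝ) : ℕ → S → ℝ
  | 0 => ρ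
  | (t + 1) => fun s' => ∑ s : S, ∑ a : A, stateDist P ρ π t s * π s a * P s a s'

/-- Normalized state-occupancy measure over horizon `H`. -/
noncomputable def occupancy {S A : Type*} [Fintype S] [Fintype A]
    (P : S → A → S → ℝ) (ρ : S → ℝ) (π : S → A → ℝ) (H : ℕ) (s : S) : ℝ :=
  (1 / H) * ∑ t ∈ Finset.range H, stateDist P ρ π t s

/-!
The state distributions `d_t` of `π` and `e_t` of `π̂` satisfy
`d_{t+1} - e_{t+1} = Σ_{s,a} (d_t(s) π(a|s) - e_t(s) π̂(a|s)) P(·|s,a)`.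
A stochastic kernel does not increase the `ℓ¹` norm, and
`d π - e π̂ = (d - e) π̂ + d (π - π̂)`, so the error grows by at most
`ε_t = E_{s∼d_t} ‖π(·|s) - π̂(·|s)‖₁` (`policyDiscrepancy`) per step: `‖d_t - e_t‖₁ ≤ Σ_{u<t} ε_u`.
Averaging over `t < H` and bounding each partial sum by the full one gives
`‖d_π - d_π̂‖₁ ≤ Σ_{u<H} ε_u = 2H · E_{s∼d_π} TV(π(·|s), π̂(·|s))`.
-/

section

variable {S A : Type*} [Fintype S] [Fintype A]

theorem stateDist_nonneg {P : S → A → S → ℝ} {ρ : S → ℝ} {π : S → A → ℝ}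
    (hP0 : ∀ s a s', 0 ≤ P s a s') (hρ0 : ∀ s, 0 ≤ ρ s) (hπ0 : ∀ s a, 0 ≤ π s a)
    (t : ℕ) (s : S) : 0 ≤ stateDist P ρ π t s := by
  induction t generalizing s with
  | zero => exact hρ0 s
  | succ t ih =>
    exact sum_nonneg fun s _ => sum_nonneg fun a _ =>
      mul_nonneg (mul_nonneg (ih s) (hπ0 s a)) (hP0 s a _)

theorem sum_abs_sum_sum_mul_kernel_le {P : S → A → S → ℝ}
    (hP0 : ∀ s a s', 0 ≤ P s a s') (hP1 : ∀ s a, ∑ s' : S, P s a s' = 1)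
    (x : S → A → ℝ) :
    ∑ s' : S, |∑ s : S, ∑ a : A, x s a * P s a s'| ≤ ∑ s : S, ∑ a : A, |x s a| :=
  calc ∑ s' : S, |∑ s : S, ∑ a : A, x s a * P s a s'|
      ≤ ∑ s' : S, ∑ s : S, ∑ a : A, |x s a| * P s a s' := by
        gcongr with s'
        refine (abs_sum_le_sum_abs _ _).trans (sum_le_sum fun s _ => ?_)
        refine (abs_sum_le_sum_abs _ _).trans (sum_le_sum fun a _ => ?_)
        rw [abs_mul, abs_of_nonneg (hP0 s a s')]
    _ = ∑ s : S, ∑ a : A, |x s a| := by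
        rw [sum_comm]
        refine sum_congr rfl fun s _ => ?_
        rw [sum_comm]
        simp only [← mul_sum, hP1, mul_one]

theorem sum_abs_mul_sub_mul_le {d e : S → ℝ} {π πhat : S → A → ℝ} (hd : ∀ s, 0 ≤ d s)
    (hπhat0 : ∀ s a, 0 ≤ πhat s a) (hπhat1 : ∀ s, ∑ a : A, πhat s a = 1) :
    ∑ s : S, ∑ a : A, |d s * π s a - e s * πhat s a|
      ≤ ∑ s : S, |d s - e s| + ∑ s : S, d s * ∑ a : A, |π s a - πhat s a| :=
  calc ∑ s : S, ∑ a : A, |d s * π s a - e s * πhat s a|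
      ≤ ∑ s : S, ∑ a : A, (|d s - e s| * πhat s a + d s * |π s a - πhat s a|) := by
        gcongr with s _ a
        calc |d s * π s a - e s * πhat s a|
            = |(d s - e s) * πhat s a + d s * (π s a - πhat s a)| := by ring_nf
          _ ≤ _ := by
            rw [← abs_of_nonneg (hπhat0 s a), ← abs_of_nonneg (hd s), ← abs_mul, ← abs_mul,
              abs_of_nonneg (hπhat0 s a), abs_of_nonneg (hd s)]
            exact abs_add_le _ _
    _ = ∑ s : S, |d s - e s| + ∑ s : S, d s * ∑ a : A, |π s a - πhat s a| := by
        simp only [sum_add_distrib, ← mul_sum, hπhat1, mul_one]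

noncomputable def policyDiscrepancy (P : S → A → S → ℝ) (ρ : S → ℝ) (π πhat : S → A → ℝ)
    (t : ℕ) : ℝ :=
  ∑ s : S, stateDist P ρ π t s * ∑ a : A, |π s a - πhat s a|

variable {P : S → A → S → ℝ} {ρ : S → ℝ} {π πhat : S → A → ℝ}

theorem policyDiscrepancy_nonneg (hP0 : ∀ s a s', 0 ≤ P s a s') (hρ0 : ∀ s, 0 ≤ ρ s)
    (hπ0 : ∀ s a, 0 ≤ π s a) (t : ℕ) : 0 ≤ policyDiscrepancy P ρ π πhat t :=
  sum_nonneg fun s _ => mul_nonneg (stateDist_nonneg hP0 hρ0 hπ0 t s)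
    (sum_nonneg fun _ _ => abs_nonneg _)

theorem sum_abs_stateDist_succ_sub_le (hP0 : ∀ s a s', 0 ≤ P s a s')
    (hP1 : ∀ s a, ∑ s' : S, P s a s' = 1) (hρ0 : ∀ s, 0 ≤ ρ s) (hπ0 : ∀ s a, 0 ≤ π s a)
    (hπhat0 : ∀ s a, 0 ≤ πhat s a) (hπhat1 : ∀ s, ∑ a : A, πhat s a = 1) (t : ℕ) :
    ∑ s : S, |stateDist P ρ π (t + 1) s - stateDist P ρ πhat (t + 1) s|
      ≤ ∑ s : S, |stateDist P ρ π t s - stateDist P ρ πhat t s|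
        + policyDiscrepancy P ρ π πhat t := by
  have hdiff : ∀ s', stateDist P ρ π (t + 1) s' - stateDist P ρ πhat (t + 1) s'
      = ∑ s : S, ∑ a : A,
          (stateDist P ρ π t s * π s a - stateDist P ρ πhat t s * πhat s a) * P s a s' := by
    intro s'
    simp only [stateDist, ← sum_sub_distrib, sub_mul]
  simp only [hdiff]
  exact (sum_abs_sum_sum_mul_kernel_le hP0 hP1 _).trans
    (sum_abs_mul_sub_mul_le (stateDist_nonneg hP0 hρ0 hπ0 t) hπhat0 hπhat1)

theorem sum_abs_stateDist_sub_le (hP0 : ∀ s a s', 0 ≤ P s a s')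
    (hP1 : ∀ s a, ∑ s' : S, P s a s' = 1) (hρ0 : ∀ s, 0 ≤ ρ s) (hπ0 : ∀ s a, 0 ≤ π s a)
    (hπhat0 : ∀ s a, 0 ≤ πhat s a) (hπhat1 : ∀ s, ∑ a : A, πhat s a = 1) (t : ℕ) :
    ∑ s : S, |stateDist P ρ π t s - stateDist P ρ πhat t s|
      ≤ ∑ u ∈ range t, policyDiscrepancy P ρ π πhat u := by
  induction t with
  | zero => simp [stateDist]
  | succ t ih =>
    rw [sum_range_succ]
    exact (sum_abs_stateDist_succ_sub_le hP0 hP1 hρ0 hπ0 hπhat0 hπhat1 t).trans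
      (add_le_add_left ih _)

theorem sum_abs_occupancy_sub_le (hP0 : ∀ s a s', 0 ≤ P s a s')
    (hP1 : ∀ s a, ∑ s' : S, P s a s' = 1) (hρ0 : ∀ s, 0 ≤ ρ s) (hπ0 : ∀ s a, 0 ≤ π s a)
    (hπhat0 : ∀ s a, 0 ≤ πhat s a) (hπhat1 : ∀ s, ∑ a : A, πhat s a = 1) (H : ℕ) :
    ∑ s : S, |occupancy P ρ π H s - occupancy P ρ πhat H s|
      ≤ 1 / H * (H * ∑ u ∈ range H, policyDiscrepancy P ρ π πhat u) :=
  calc ∑ s : S, |occupancy P ρ π H s - occupancy P ρ πhat H s|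
      ≤ ∑ s : S, 1 / H * ∑ t ∈ range H, |stateDist P ρ π t s - stateDist P ρ πhat t s| := by
        gcongr with s
        rw [occupancy, occupancy, ← mul_sub, abs_mul, abs_of_nonneg (by positivity),
          ← sum_sub_distrib]
        gcongr
        exact abs_sum_le_sum_abs _ _
    _ = 1 / H * ∑ t ∈ range H, ∑ s : S, |stateDist P ρ π t s - stateDist P ρ πhat t s| := by
        rw [← mul_sum, sum_comm]
    _ ≤ 1 / H * ∑ t ∈ range H, ∑ u ∈ range H, policyDiscrepancy P ρ π πhat u := by
        gcongr with t ht
        refine (sum_abs_stateDist_sub_le hP0 hP1 hρ0 hπ0 hπhat0 hπhat1 t).trans ?_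
        exact sum_le_sum_of_subset_of_nonneg (range_subset_range.mpr (mem_range.mp ht).le)
          fun u _ _ => policyDiscrepancy_nonneg hP0 hρ0 hπ0 u
    _ = 1 / H * (H * ∑ u ∈ range H, policyDiscrepancy P ρ π πhat u) := by
        rw [sum_const, card_range, nsmul_eq_mul]

theorem sum_occupancy_mul_sum_abs_sub (H : ℕ) :
    ∑ s : S, occupancy P ρ π H s * ∑ a : A, |π s a - πhat s a|
      = 1 / H * ∑ t ∈ range H, policyDiscrepancy P ρ π πhat t := by
  simp only [occupancy, policyDiscrepancy, mul_assoc, ← mul_sum, sum_mul]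
  rw [sum_comm]

end

theorem occupancy_difference_general
    {S A : Type*} [Fintype S] [Fintype A]
    (P : S → A → S → ℝ) (ρ : S → ℝ) (π πhat : S → A → ℝ) (H : ℕ)
    (hP0 : ∀ s a s', 0 ≤ P s a s') (hP1 : ∀ s a, ∑ s' : S, P s a s' = 1)
    (hρ0 : ∀ s, 0 ≤ ρ s)
    (hπ0 : ∀ s a, 0 ≤ π s a)
    (hπhat0 : ∀ s a, 0 ≤ πhat s a) (hπhat1 : ∀ s, ∑ a : A, πhat s a = 1) :
    ∑ s : S, |occupancy P ρ π H s - occupancy P ρ πhat H s|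
      ≤ 2 * H * ∑ s : S, occupancy P ρ π H s *
          ((1 / 2) * ∑ a : A, |π s a - πhat s a|) := by
  have hrhs : 2 * H * ∑ s : S, occupancy P ρ π H s * ((1 / 2) * ∑ a : A, |π s a - πhat s a|)
      = H * (1 / H * ∑ t ∈ range H, policyDiscrepancy P ρ π πhat t) := by
    rw [← sum_occupancy_mul_sum_abs_sub, mul_sum, mul_sum]
    refine sum_congr rfl fun s _ => ?_
    ring
  rw [hrhs, mul_left_comm]
  exact sum_abs_occupancy_sub_le hP0 hP1 hρ0 hπ0 hπhat0 hπhat1 H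

/-- Occupancy-difference lemma:
`‖d_π − d_πhat‖₁ ≤ 2H·E_{s∼d_π}[TV(π(·|s), πhat(·|s))]`. -/
theorem occupancy_difference
    {S A : Type*} [Fintype S] [Fintype A]
    (P : S → A → S → ℝ) (ρ : S → ℝ) (π πhat : S → A → ℝ) (H : ℕ) (hH : 0 < H)
    (hP0 : ∀ s a s', 0 ≤ P s a s') (hP1 : ∀ s a, ∑ s' : S, P s a s' = 1)
    (hρ0 : ∀ s, 0 ≤ ρ s) (hρ1 : ∑ s : S, ρ s = 1)
    (hπ0 : ∀ s a, 0 ≤ π s a) (hπ1 : ∀ s, ∑ a : A, π s a = 1)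
    (hπhat0 : ∀ s a, 0 ≤ πhat s a) (hπhat1 : ∀ s, ∑ a : A, πhat s a = 1) :
    ∑ s : S, |occupancy P ρ π H s - occupancy P ρ πhat H s|
      ≤ 2 * H * ∑ s : S, occupancy P ρ π H s *
          ((1 / 2) * ∑ a : A, |π s a - πhat s a|) :=
  occupancy_difference_general P ρ π πhat H hP0 hP1 hρ0 hπ0 hπhat0 hπhat1
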